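/- For every p ∈ (1,2) and every positive integer n, one has |Φ_n(s) − |s|^p| ≤ 2/n^p for all s ∈ ℝ; in particular Φ_n converges to s ↦ |s|^p uniformly on ℝ as n → ∞. -/
import Mathlib


/-- The `C²` regularization of `s ↦ |s|^p` from the proof of Lemma 3.2. -/
noncomputable def Phi (p : ℝ) (n : ℕ) (s : ℝ) : ℝ :=
  if 1 / (n : ℝ) < |s| then |s| ^ p
  else p * (p - 2) / (8 * (n : ℝ) ^ p) * ((n : ℝ) ^ 2 * s ^ 2 - 1) ^ 2
      + p / (2 * (n : ℝ) ^ p) * ((n : ℝ) ^ 2 * s ^ 2 - 1) + 1 / (n : ℝ) ^ p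

lemma phi_bound (p : ℝ) (hp1 : 1 < p) (hp2 : p < 2) (n : ℕ) (hn : 0 < n) (s : ℝ) :
    |Phi p n s - |s| ^ p| ≤ 2 / (n : ℝ)^p := by
  have hn0 : (0:ℝ) < n := by exact_mod_cast hn
  have hnp : (0:ℝ) < (n:ℝ)^p := Real.rpow_pos_of_pos hn0 p
  unfold Phi
  split_ifs with h
  · simp only [sub_self, abs_zero]
    positivity
  · push_neg at h
    have hn1 : (1:ℝ) ≤ (n:ℝ) := by exact_mod_cast hn
    set c : ℝ := 1 / (n:ℝ)^p with hc
    have hcpos : 0 < c := by positivity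
    have hns : (n:ℝ) * |s| ≤ 1 := by
      rw [le_div_iff₀ hn0] at h
      linarith [h]
    have hs0 : 0 ≤ |s| := abs_nonneg s
    set t : ℝ := (n:ℝ)^2 * s^2 - 1 with htdef
    have ht1 : -1 ≤ t := by nlinarith [sq_nonneg ((n:ℝ)*s)]
    have ht0 : t ≤ 0 := by
      nlinarith [mul_le_mul hns hns (mul_nonneg hn0.le hs0) zero_le_one, sq_abs s]
    have hX : |s|^p ≤ c := by
      rw [hc]
      have : |s|^p ≤ (1/(n:ℝ))^p := by
        exact Real.rpow_le_rpow hs0 h (by linarith)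
      calc |s|^p ≤ (1/(n:ℝ))^p := this
        _ = 1 / (n:ℝ)^p := by
            rw [Real.div_rpow zero_le_one hn0.le, Real.one_rpow]
    have hX0 : 0 ≤ |s|^p := Real.rpow_nonneg hs0 p
    have e1 : p * (p - 2) / (8 * (n:ℝ)^p) = p * (p-2) / 8 * c := by
      rw [hc]; field_simp
    have e2 : p / (2 * (n:ℝ)^p) = p / 2 * c := by
      rw [hc]; field_simp
    clear_value t c
    have e3 : 2 / (n:ℝ)^p = 2 * c := by rw [hc]; ring
    have ht2 : t^2 ≤ 1 := by nlinarith
    rw [e1, e2, e3, abs_le]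
    constructor
    · nlinarith [mul_nonneg (mul_nonneg (sq_nonneg (p-1)) hcpos.le) (sq_nonneg t),
        mul_nonneg hcpos.le (sub_nonneg.mpr ht2),
        mul_nonneg (mul_nonneg (by linarith : (0:ℝ) ≤ 2 - p) hcpos.le) (neg_nonneg.mpr ht0),
        mul_nonneg hcpos.le (by linarith : (0:ℝ) ≤ 1 + t)]
    · nlinarith [mul_nonneg (mul_nonneg (by nlinarith : (0:ℝ) ≤ p * (2 - p)) hcpos.le) (sq_nonneg t),
        mul_nonneg (mul_nonneg (by linarith : (0:ℝ) ≤ p) hcpos.le) (neg_nonneg.mpr ht0)]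

theorem stmt_1 (p : ℝ) (hp1 : 1 < p) (hp2 : p < 2) :
    (∀ n : ℕ, 0 < n → ∀ s : ℝ, |Phi p n s - |s| ^ p| ≤ 2 / (n : ℝ) ^ p) ∧
    TendstoUniformly (fun (n : ℕ) (s : ℝ) => Phi p n s) (fun s => |s| ^ p) Filter.atTop := by
  refine ⟨fun n hn s => phi_bound p hp1 hp2 n hn s, ?_⟩
  rw [Metric.tendstoUniformly_iff]
  intro ε hε
  have hlim : Filter.Tendsto (fun n : ℕ => 2 / (n:ℝ)^p) Filter.atTop (nhds 0) := by
    apply Filter.Tendsto.div_atTop tendsto_const_nhds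
    exact (tendsto_rpow_atTop (by linarith)).comp tendsto_natCast_atTop_atTop
  have := (hlim.eventually (gt_mem_nhds hε))
  filter_upwards [this, Filter.eventually_gt_atTop 0] with n h1 h2 s
  rw [Real.dist_eq, abs_sub_comm]
  exact lt_of_le_of_lt (phi_bound p hp1 hp2 n h2 s) h1
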